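/- Continuous embeddings G^{n+1}_q ⊆ Lip^{n+1}_q ⊆ G^n_{q+1} with constant 1: for all real Banach spaces V₁, V₂, every integer n ≥ 0 and every q ∈ [0,∞): (i) for every φ ∈ Cⁿ(V₁,V₂) one has ‖φ‖_{G^n_{q+1}(V₁,V₂)} ≤ ‖φ‖_{Lip^{n+1}_q(V₁,V₂)}; and (ii) for every φ ∈ C^{n+1}(V₁,V₂) one has ‖φ‖_{Lip^{n+1}_q(V₁,V₂)} ≤ ‖φ‖_{G^{n+1}_q(V₁,V₂)} (inequalities in [0,∞]). In particular G^{n+1}_q(V₁,V₂) ⊆ Lip^{n+1}_q(V₁,V₂) ⊆ G^n_{q+1}(V₁,V₂) with continuous inclusions. -/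

import Mathlib

/-!
The top-order term of `LipNorm n q φ` is a weighted Lipschitz seminorm `L` of `g = φ⁽ⁿ⁾`, that of
`Gnorm n q φ` a weighted sup norm of `g`. Writing `g v = g 0 + (g v - g 0)` bounds
`‖g v‖ / (1 + ‖v‖)^(q+1)` by `‖g 0‖ + L`, and `‖g 0‖` is the extra summand of `LipNorm`. Conversely,
the mean value inequality on the ball of radius `max ‖v‖ ‖w‖`, where the weight `(1 + ‖u‖)^q` is
largest on the boundary, bounds `L` by the weighted sup norm of `fderiv g ≅ φ⁽ⁿ⁺¹⁾`.
-/

open scoped ENNReal NNReal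

/-- The weighted norm `‖φ‖_{G^n_q} ∈ [0,∞]`. -/
noncomputable def Gnorm {V₁ V₂ : Type*} [NormedAddCommGroup V₁] [NormedSpace ℝ V₁]
    [NormedAddCommGroup V₂] [NormedSpace ℝ V₂] (n : ℕ) (q : ℝ) (φ : V₁ → V₂) : ℝ≥0∞ :=
  (∑ i ∈ Finset.range n, (‖iteratedFDeriv ℝ i φ 0‖₊ : ℝ≥0∞))
    + ⨆ v : V₁, (‖iteratedFDeriv ℝ n φ v‖₊ : ℝ≥0∞) / ENNReal.ofReal ((1 + ‖v‖) ^ q)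

/-- The weighted Lipschitz norm `‖φ‖_{Lip^{n+1}_q} ∈ [0,∞]`. -/
noncomputable def LipNorm {V₁ V₂ : Type*} [NormedAddCommGroup V₁] [NormedSpace ℝ V₁]
    [NormedAddCommGroup V₂] [NormedSpace ℝ V₂] (n : ℕ) (q : ℝ) (φ : V₁ → V₂) : ℝ≥0∞ :=
  (∑ i ∈ Finset.range (n + 1), (‖iteratedFDeriv ℝ i φ 0‖₊ : ℝ≥0∞))
    + ⨆ (v : V₁) (w : V₁) (_ : v ≠ w),
        (‖iteratedFDeriv ℝ n φ v - iteratedFDeriv ℝ n φ w‖₊ : ℝ≥0∞) /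
          ENNReal.ofReal ((1 + max ‖v‖ ‖w‖) ^ q * ‖v - w‖)

section Weighted

variable {V E : Type*} [NormedAddCommGroup V] [NormedAddCommGroup E]

noncomputable def weightedSupNorm (q : ℝ) (g : V → E) : ℝ≥0∞ :=
  ⨆ v : V, ‖g v‖ₑ / ENNReal.ofReal ((1 + ‖v‖) ^ q)

noncomputable def weightedLipSeminorm (q : ℝ) (g : V → E) : ℝ≥0∞ :=
  ⨆ (v : V) (w : V) (_ : v ≠ w),
    ‖g v - g w‖ₑ / ENNReal.ofReal ((1 + max ‖v‖ ‖w‖) ^ q * ‖v - w‖)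

lemma enorm_le_weightedSupNorm_mul (q : ℝ) (g : V → E) (v : V) :
    ‖g v‖ₑ ≤ weightedSupNorm q g * ENNReal.ofReal ((1 + ‖v‖) ^ q) := by
  have hpos : 0 < (1 + ‖v‖) ^ q := by positivity
  rw [← ENNReal.div_le_iff (by simpa using hpos) ENNReal.ofReal_ne_top]
  exact le_iSup (fun v ↦ ‖g v‖ₑ / ENNReal.ofReal ((1 + ‖v‖) ^ q)) v

lemma norm_le_toReal_weightedSupNorm_mul {q : ℝ} {g : V → E} (hg : weightedSupNorm q g ≠ ⊤)
    (v : V) : ‖g v‖ ≤ (weightedSupNorm q g).toReal * (1 + ‖v‖) ^ q := by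
  have h := enorm_le_weightedSupNorm_mul q g v
  rw [← ENNReal.ofReal_toReal hg, ← ENNReal.ofReal_mul ENNReal.toReal_nonneg, ← ofReal_norm] at h
  exact (ENNReal.ofReal_le_ofReal_iff (by positivity)).1 h

lemma enorm_sub_le_weightedLipSeminorm_mul (q : ℝ) (g : V → E) (v w : V) :
    ‖g v - g w‖ₑ ≤
      weightedLipSeminorm q g * ENNReal.ofReal ((1 + max ‖v‖ ‖w‖) ^ q * ‖v - w‖) := by
  rcases eq_or_ne v w with rfl | hvw
  · simp
  have hpos : 0 < (1 + max ‖v‖ ‖w‖) ^ q * ‖v - w‖ := by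
    have : 0 < ‖v - w‖ := norm_pos_iff.2 (sub_ne_zero.2 hvw)
    positivity
  rw [← ENNReal.div_le_iff (by simpa using hpos) ENNReal.ofReal_ne_top]
  refine le_trans ?_ (le_iSup _ v)
  refine le_trans ?_ (le_iSup _ w)
  exact le_iSup (fun _ : v ≠ w ↦ _) hvw

lemma weightedSupNorm_add_one_le {q : ℝ} (hq : 0 ≤ q + 1) (g : V → E) :
    weightedSupNorm (q + 1) g ≤ ‖g 0‖ₑ + weightedLipSeminorm q g := by
  refine iSup_le fun v ↦ ENNReal.div_le_of_le_mul ?_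
  have hweight : (1 + ‖v‖) ^ q * ‖v‖ ≤ (1 + ‖v‖) ^ (q + 1) := by
    rw [Real.rpow_add_one (by positivity)]
    gcongr
    linarith
  have hone : 1 ≤ ENNReal.ofReal ((1 + ‖v‖) ^ (q + 1)) :=
    ENNReal.one_le_ofReal.2 (Real.one_le_rpow (by linarith [norm_nonneg v]) hq)
  calc ‖g v‖ₑ ≤ ‖g 0‖ₑ + ‖g v - g 0‖ₑ := by
        simpa using enorm_add_le (g 0) (g v - g 0)
    _ ≤ ‖g 0‖ₑ + weightedLipSeminorm q g * ENNReal.ofReal ((1 + ‖v‖) ^ q * ‖v‖) := by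
        gcongr
        simpa using enorm_sub_le_weightedLipSeminorm_mul q g v 0
    _ ≤ ‖g 0‖ₑ * ENNReal.ofReal ((1 + ‖v‖) ^ (q + 1))
          + weightedLipSeminorm q g * ENNReal.ofReal ((1 + ‖v‖) ^ (q + 1)) := by
        gcongr
        · exact le_mul_of_one_le_right' hone
    _ = _ := (add_mul _ _ _).symm

variable [NormedSpace ℝ V] [NormedSpace ℝ E]

lemma weightedLipSeminorm_le_weightedSupNorm_fderiv {q : ℝ} (hq : 0 ≤ q) {g : V → E}
    (hg : Differentiable ℝ g) : weightedLipSeminorm q g ≤ weightedSupNorm q (fderiv ℝ g) := by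
  refine iSup_le fun v ↦ iSup_le fun w ↦ iSup_le fun _ ↦ ?_
  rcases eq_or_ne (weightedSupNorm q (fderiv ℝ g)) ⊤ with htop | htop
  · simp [htop]
  set M := (weightedSupNorm q (fderiv ℝ g)).toReal
  set R := max ‖v‖ ‖w‖
  have hball {u : V} (hu : u = v ∨ u = w) : u ∈ Metric.closedBall (0 : V) R := by
    rcases hu with rfl | rfl <;> simp [R]
  have hderiv (u : V) (hu : u ∈ Metric.closedBall (0 : V) R) :
      ‖fderiv ℝ g u‖ ≤ M * (1 + R) ^ q := by
    refine (norm_le_toReal_weightedSupNorm_mul htop u).trans ?_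
    have : ‖u‖ ≤ R := by simpa using hu
    gcongr
  have hmvt : ‖g v - g w‖ ≤ M * (1 + R) ^ q * ‖v - w‖ :=
    (convex_closedBall 0 R).norm_image_sub_le_of_norm_fderiv_le (fun u _ ↦ hg u) hderiv
      (hball (.inr rfl)) (hball (.inl rfl))
  refine ENNReal.div_le_of_le_mul ?_
  rw [← ENNReal.ofReal_toReal htop, ← ENNReal.ofReal_mul ENNReal.toReal_nonneg, ← ofReal_norm,
    ← mul_assoc]
  exact ENNReal.ofReal_le_ofReal hmvt

end Weighted

lemma weightedSupNorm_fderiv_iteratedFDeriv {V₁ V₂ : Type*} [NormedAddCommGroup V₁]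
    [NormedSpace ℝ V₁] [NormedAddCommGroup V₂] [NormedSpace ℝ V₂] (n : ℕ) (q : ℝ)
    (φ : V₁ → V₂) :
    weightedSupNorm q (fderiv ℝ (iteratedFDeriv ℝ n φ)) =
      weightedSupNorm q (iteratedFDeriv ℝ (n + 1) φ) := by
  simp only [weightedSupNorm, ← ofReal_norm, norm_fderiv_iteratedFDeriv]

section NormDecomposition

variable {V₁ V₂ : Type*} [NormedAddCommGroup V₁] [NormedSpace ℝ V₁]
  [NormedAddCommGroup V₂] [NormedSpace ℝ V₂]

lemma Gnorm_eq (n : ℕ) (q : ℝ) (φ : V₁ → V₂) :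
    Gnorm n q φ = (∑ i ∈ Finset.range n, ‖iteratedFDeriv ℝ i φ 0‖ₑ)
      + weightedSupNorm q (iteratedFDeriv ℝ n φ) := rfl

lemma LipNorm_eq (n : ℕ) (q : ℝ) (φ : V₁ → V₂) :
    LipNorm n q φ = (∑ i ∈ Finset.range (n + 1), ‖iteratedFDeriv ℝ i φ 0‖ₑ)
      + weightedLipSeminorm q (iteratedFDeriv ℝ n φ) := rfl

lemma Gnorm_add_one_le_LipNorm {q : ℝ} (hq : 0 ≤ q + 1) (n : ℕ) (φ : V₁ → V₂) :
    Gnorm n (q + 1) φ ≤ LipNorm n q φ := by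
  rw [Gnorm_eq, LipNorm_eq, Finset.sum_range_succ, add_assoc]
  gcongr
  exact weightedSupNorm_add_one_le hq _

lemma LipNorm_le_Gnorm_add_one {q : ℝ} (hq : 0 ≤ q) {n : ℕ} {φ : V₁ → V₂}
    (hφ : ContDiff ℝ (n + 1) φ) : LipNorm n q φ ≤ Gnorm (n + 1) q φ := by
  rw [Gnorm_eq, LipNorm_eq, ← weightedSupNorm_fderiv_iteratedFDeriv]
  gcongr
  exact weightedLipSeminorm_le_weightedSupNorm_fderiv hq
    (hφ.differentiable_iteratedFDeriv (by exact_mod_cast n.lt_succ_self))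

end NormDecomposition

theorem Lip_between_G_general {V₁ V₂ : Type*}
    [NormedAddCommGroup V₁] [NormedSpace ℝ V₁]
    [NormedAddCommGroup V₂] [NormedSpace ℝ V₂]
    (n : ℕ) (q : ℝ) (hq : 0 ≤ q) :
    (∀ φ : V₁ → V₂, ContDiff ℝ n φ → Gnorm n (q + 1) φ ≤ LipNorm n q φ) ∧
    (∀ φ : V₁ → V₂, ContDiff ℝ (n + 1) φ → LipNorm n q φ ≤ Gnorm (n + 1) q φ) ∧
    {φ : V₁ → V₂ | ContDiff ℝ (n + 1) φ ∧ Gnorm (n + 1) q φ < ⊤} ⊆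
      {φ : V₁ → V₂ | ContDiff ℝ n φ ∧ LipNorm n q φ < ⊤} ∧
    {φ : V₁ → V₂ | ContDiff ℝ n φ ∧ LipNorm n q φ < ⊤} ⊆
      {φ : V₁ → V₂ | ContDiff ℝ n φ ∧ Gnorm n (q + 1) φ < ⊤} := by
  have hq' : 0 ≤ q + 1 := by linarith
  refine ⟨fun φ _ ↦ Gnorm_add_one_le_LipNorm hq' n φ, fun φ hφ ↦ LipNorm_le_Gnorm_add_one hq hφ,
    ?_, ?_⟩
  · rintro φ ⟨hφ, hG⟩
    exact ⟨hφ.of_le (by exact_mod_cast n.le_succ), (LipNorm_le_Gnorm_add_one hq hφ).trans_lt hG⟩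
  · rintro φ ⟨hφ, hLip⟩
    exact ⟨hφ, (Gnorm_add_one_le_LipNorm hq' n φ).trans_lt hLip⟩

/-- **Continuous embeddings `G^{n+1}_q ⊆ Lip^{n+1}_q ⊆ G^n_{q+1}` with constant 1**:
(i) `‖φ‖_{G^n_{q+1}} ≤ ‖φ‖_{Lip^{n+1}_q}` for `φ ∈ Cⁿ`; (ii) `‖φ‖_{Lip^{n+1}_q} ≤ ‖φ‖_{G^{n+1}_q}`
for `φ ∈ C^{n+1}`; in particular the corresponding sets are nested. -/
theorem Lip_between_G {V₁ V₂ : Type*}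
    [NormedAddCommGroup V₁] [NormedSpace ℝ V₁] [CompleteSpace V₁]
    [NormedAddCommGroup V₂] [NormedSpace ℝ V₂] [CompleteSpace V₂]
    (n : ℕ) (q : ℝ) (hq : 0 ≤ q) :
    (∀ φ : V₁ → V₂, ContDiff ℝ n φ → Gnorm n (q + 1) φ ≤ LipNorm n q φ) ∧
    (∀ φ : V₁ → V₂, ContDiff ℝ (n + 1) φ → LipNorm n q φ ≤ Gnorm (n + 1) q φ) ∧
    {φ : V₁ → V₂ | ContDiff ℝ (n + 1) φ ∧ Gnorm (n + 1) q φ < ⊤} ⊆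
      {φ : V₁ → V₂ | ContDiff ℝ n φ ∧ LipNorm n q φ < ⊤} ∧
    {φ : V₁ → V₂ | ContDiff ℝ n φ ∧ LipNorm n q φ < ⊤} ⊆
      {φ : V₁ → V₂ | ContDiff ℝ n φ ∧ Gnorm n (q + 1) φ < ⊤} :=
  Lip_between_G_general n q hq
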